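/- The proximity operator of the OWL norm commutes with sorting: prox_{Ω_w}(v) = sign(v) ⊙ (P(|v|)^T prox_{Ω_w}(|v|_↓)), where P(|v|) is a permutation matrix sorting |v| into non-increasing order |v|_↓. -/

import Mathlib

/-!
The objective `proxObj w v` is strictly convex (a strictly convex quadratic plus the OWL norm,
which is convex by the rearrangement inequality), so its minimizer is unique. Signed
permutations `x ↦ s ⊙ (x ∘ σ⁻¹)` with `|s| = 1` preserve both the quadratic and the OWL norm,
hence map minimizers to minimizers. Taking `s` to be a sign pattern of `v` carries
`|v ∘ σ|` to `v`, so the image of `q` is `p`. On coordinates where `v` vanishes `Real.sign`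
is `0`, and there both sides vanish because minimizers are zero wherever `v` is.
-/

open Finset

/-- The vector of absolute values of x, sorted in non-increasing order. -/
noncomputable def absSorted {n : ℕ} (x : Fin n → ℝ) : Fin n → ℝ :=
  fun i => |x (Tuple.sort (fun j => -|x j|) i)|

/-- The ordered weighted l1 norm Omega_w(x). -/
noncomputable def owl {n : ℕ} (w x : Fin n → ℝ) : ℝ := ∑ i, w i * absSorted x i

/-- The objective defining the proximity operator of Omega_w at v. -/
noncomputable def proxObj {n : ℕ} (w v x : Fin n → ℝ) : ℝ :=
  (1 / 2) * ∑ i, (x i - v i) ^ 2 + owl w x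

open Equiv Function Set

theorem strictConvexOn_const_mul_sum_sq_sub {ι : Type*} [Fintype ι] {c : ℝ} (hc : 0 < c)
    (v : ι → ℝ) : StrictConvexOn ℝ univ fun x : ι → ℝ => c * ∑ i, (x i - v i) ^ 2 := by
  refine ⟨convex_univ, fun x _ y _ hxy a b ha hb hab => ?_⟩
  obtain rfl : b = 1 - a := by linarith
  obtain ⟨k, hk⟩ := Function.ne_iff.mp hxy
  have hgap : 0 < ∑ i, (x i - y i) ^ 2 :=
    sum_pos' (fun i _ => sq_nonneg _) ⟨k, mem_univ k, sq_pos_of_ne_zero (sub_ne_zero.mpr hk)⟩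
  have hterm : ∀ i, (a * x i + (1 - a) * y i - v i) ^ 2 = a * (x i - v i) ^ 2
      + (1 - a) * (y i - v i) ^ 2 - a * (1 - a) * (x i - y i) ^ 2 := fun i => by ring
  simp only [Pi.add_apply, Pi.smul_apply, smul_eq_mul, hterm, sum_sub_distrib, sum_add_distrib,
    ← mul_sum]
  nlinarith [mul_pos hc (mul_pos ha hb)]

section Owl

variable {n : ℕ}

theorem absSorted_congr {x y : Fin n → ℝ} (h : ∀ i, |x i| = |y i|) :
    absSorted x = absSorted y := by
  funext i
  simp only [absSorted, h]

theorem absSorted_comp_perm (x : Fin n → ℝ) (σ : Perm (Fin n)) :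
    absSorted (x ∘ σ) = absSorted x := by
  funext i
  exact neg_injective <|
    congrFun (Tuple.comp_perm_comp_sort_eq_comp_sort (f := fun j => -|x j|) (σ := σ)) i

theorem antitone_absSorted (x : Fin n → ℝ) : Antitone (absSorted x) := fun _ _ hij =>
  neg_le_neg_iff.mp (Tuple.monotone_sort (fun j => -|x j|) hij)

theorem owl_congr (w : Fin n → ℝ) {x y : Fin n → ℝ} (h : ∀ i, |x i| = |y i|) :
    owl w x = owl w y := by
  rw [owl, owl, absSorted_congr h]

theorem owl_comp_perm (w x : Fin n → ℝ) (σ : Perm (Fin n)) : owl w (x ∘ σ) = owl w x := by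
  rw [owl, owl, absSorted_comp_perm]

theorem sum_mul_abs_comp_perm_le_owl {w : Fin n → ℝ} (hw : Antitone w) (x : Fin n → ℝ)
    (π : Perm (Fin n)) : ∑ i, w i * |x (π i)| ≤ owl w x := by
  set ρ := Tuple.sort fun j => -|x j|
  have h := (hw.monovary (antitone_absSorted x)).sum_mul_comp_perm_le_sum_mul
    (σ := π.trans ρ.symm)
  rw [owl]
  simpa only [absSorted, ρ, trans_apply, apply_symm_apply] using h

theorem convexOn_owl {w : Fin n → ℝ} (hw : Antitone w) (hw0 : ∀ i, 0 ≤ w i) :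
    ConvexOn ℝ univ (owl w) := by
  refine ⟨convex_univ, fun a _ b _ s t hs ht _ => ?_⟩
  set ρ := Tuple.sort fun j => -|(s • a + t • b) j|
  calc owl w (s • a + t • b) = ∑ i, w i * |s * a (ρ i) + t * b (ρ i)| := rfl
    _ ≤ ∑ i, w i * (s * |a (ρ i)| + t * |b (ρ i)|) := by
      gcongr with i
      · exact hw0 i
      · refine (abs_add_le _ _).trans_eq ?_
        rw [abs_mul, abs_mul, abs_of_nonneg hs, abs_of_nonneg ht]
    _ = s * ∑ i, w i * |a (ρ i)| + t * ∑ i, w i * |b (ρ i)| := by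
      simp only [mul_sum, ← sum_add_distrib]
      exact sum_congr rfl fun i _ => by ring
    _ ≤ s • owl w a + t • owl w b := by
      rw [smul_eq_mul, smul_eq_mul]
      gcongr <;> exact sum_mul_abs_comp_perm_le_owl hw _ ρ

theorem strictConvexOn_proxObj {w : Fin n → ℝ} (hw : Antitone w) (hw0 : ∀ i, 0 ≤ w i)
    (v : Fin n → ℝ) : StrictConvexOn ℝ univ (proxObj w v) :=
  (strictConvexOn_const_mul_sum_sq_sub one_half_pos v).add_convexOn (convexOn_owl hw hw0)

theorem proxObj_minimizer_unique {w : Fin n → ℝ} (hw : Antitone w) (hw0 : ∀ i, 0 ≤ w i)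
    {v a b : Fin n → ℝ} (ha : ∀ x, proxObj w v a ≤ proxObj w v x)
    (hb : ∀ x, proxObj w v b ≤ proxObj w v x) : a = b :=
  (strictConvexOn_proxObj hw hw0 v).eq_of_isMinOn (fun x _ => ha x) (fun x _ => hb x)
    (mem_univ a) (mem_univ b)

def signedPerm (s : Fin n → ℝ) (σ : Perm (Fin n)) (x : Fin n → ℝ) : Fin n → ℝ :=
  fun i => s i * x (σ.symm i)

section SignedPerm

variable {s : Fin n → ℝ} (hs : ∀ i, |s i| = 1)
include hs

theorem signedPerm_signedPerm (σ : Perm (Fin n)) (x : Fin n → ℝ) :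
    signedPerm s σ (signedPerm (s ∘ σ) σ.symm x) = x := by
  funext i
  have hsi : s i * s i = 1 := by rw [← abs_mul_abs_self, hs, one_mul]
  simp only [signedPerm, comp_apply, symm_symm, apply_symm_apply, ← mul_assoc, hsi, one_mul]

theorem proxObj_signedPerm (w : Fin n → ℝ) (σ : Perm (Fin n)) (v x : Fin n → ℝ) :
    proxObj w (signedPerm s σ v) (signedPerm s σ x) = proxObj w v x := by
  have hquad : ∑ i, (signedPerm s σ x i - signedPerm s σ v i) ^ 2 = ∑ i, (x i - v i) ^ 2 := by
    rw [← Equiv.sum_comp σ]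
    simp only [signedPerm, symm_apply_apply, ← mul_sub, mul_pow, ← sq_abs (s _), hs, one_pow,
      one_mul]
  have howl : owl w (signedPerm s σ x) = owl w x := by
    rw [owl_congr w (y := x ∘ σ.symm) fun i => by simp [signedPerm, abs_mul, hs],
      owl_comp_perm]
  rw [proxObj, proxObj, hquad, howl]

theorem isMinimizer_signedPerm {w v p : Fin n → ℝ} (σ : Perm (Fin n))
    (hp : ∀ x, proxObj w v p ≤ proxObj w v x) (x : Fin n → ℝ) :
    proxObj w (signedPerm s σ v) (signedPerm s σ p) ≤ proxObj w (signedPerm s σ v) x :=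
  calc proxObj w (signedPerm s σ v) (signedPerm s σ p) = proxObj w v p :=
        proxObj_signedPerm hs w σ v p
    _ ≤ proxObj w v (signedPerm (s ∘ σ) σ.symm x) := hp _
    _ = proxObj w (signedPerm s σ v) x := by
        rw [← proxObj_signedPerm hs w σ, signedPerm_signedPerm hs]

end SignedPerm

/-- Flipping the sign of a coordinate where `v` vanishes maps minimizers to minimizers. -/
theorem proxObj_minimizer_eq_zero {w : Fin n → ℝ} (hw : Antitone w) (hw0 : ∀ i, 0 ≤ w i)
    {v p : Fin n → ℝ} (hp : ∀ x, proxObj w v p ≤ proxObj w v x) {i : Fin n} (hvi : v i = 0) :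
    p i = 0 := by
  set s : Fin n → ℝ := update 1 i (-1)
  have hs : ∀ j, |s j| = 1 := fun j => by by_cases h : j = i <;> simp [s, h]
  have hv : signedPerm s (Equiv.refl _) v = v := by
    funext j
    by_cases h : j = i
    · simp [signedPerm, s, h, hvi]
    · simp [signedPerm, s, h]
  have hflip :=
    proxObj_minimizer_unique hw hw0 hp (hv ▸ isMinimizer_signedPerm hs (Equiv.refl _) hp)
  have := congrFun hflip i
  simp only [signedPerm, s, update_self, refl_symm, refl_apply] at this
  linarith

end Owl

theorem owl_prox_sort_general {n : ℕ} (w : Fin n → ℝ) (hmono : Antitone w)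
    (hnonneg : ∀ i, 0 ≤ w i) (v p q : Fin n → ℝ) (σ : Equiv.Perm (Fin n))
    (hp : ∀ x, proxObj w v p ≤ proxObj w v x)
    (hq : ∀ x, proxObj w (fun i => |v (σ i)|) q ≤ proxObj w (fun i => |v (σ i)|) x) :
    p = fun i => Real.sign (v i) * q (σ.symm i) := by
  set u : Fin n → ℝ := fun i => |v (σ i)|
  -- Unlike `Real.sign`, `s` never vanishes, so `signedPerm s σ` is invertible.
  set s : Fin n → ℝ := fun i => if 0 ≤ v i then 1 else -1
  have hs : ∀ i, |s i| = 1 := fun i => by by_cases h : 0 ≤ v i <;> simp [s, h]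
  have hv : signedPerm s σ u = v := by
    funext i
    by_cases h : 0 ≤ v i
    · simp [signedPerm, s, u, h, abs_of_nonneg h]
    · simp [signedPerm, s, u, h, abs_of_neg (not_le.mp h)]
  rw [proxObj_minimizer_unique hmono hnonneg hp (hv ▸ isMinimizer_signedPerm hs σ hq)]
  funext i
  rcases lt_trichotomy (v i) 0 with h | h | h
  · simp [signedPerm, s, h.not_ge, Real.sign_of_neg h]
  · have hq0 : q (σ.symm i) = 0 := proxObj_minimizer_eq_zero hmono hnonneg hq (by simp [u, h])
    simp [signedPerm, hq0]
  · simp [signedPerm, s, h.le, Real.sign_of_pos h]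

/-- The proximity operator of the OWL norm commutes with sorting:
prox(v) = sign(v) ⊙ P(|v|)ᵀ prox(|v|↓), where the permutation σ sorts |v| into
non-increasing order. -/
theorem owl_prox_sort {n : ℕ} (w : Fin n → ℝ) (hmono : Antitone w)
    (hnonneg : ∀ i, 0 ≤ w i) (v p q : Fin n → ℝ) (σ : Equiv.Perm (Fin n))
    (hσ : Antitone fun i => |v (σ i)|)
    (hp : ∀ x, proxObj w v p ≤ proxObj w v x)
    (hq : ∀ x, proxObj w (fun i => |v (σ i)|) q ≤ proxObj w (fun i => |v (σ i)|) x) :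
    p = fun i => Real.sign (v i) * q (σ.symm i) :=
  owl_prox_sort_general w hmono hnonneg v p q σ hp hq
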